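/- arXiv:math/0103081 — 3 statements merged into one kernel-verified Lean document; each statement's English description precedes it below -/
import Mathlib

section
/- Let E : σ_k → ℝ^n be Lipschitz with constant L, where σ_k is the standard closed k-simplex. Then ∫_{ℝ^n} N(E, y) dh_k(y) ≤ L^k · m_k(σ_k) · C_k for a dimensional constant C_k, where N(E,y) is the number of preimages of y; in particular N(E, y) is finite for h_k-almost every y. -/
open MeasureTheory Set Filter
open scoped NNReal ENNReal

/-- The standard closed `k`-simplex in `ℝᵏ`. -/
def stdClosedSimplex (k : ℕ) : Set (EuclideanSpace ℝ (Fin k)) :=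
  {x | (∀ i, 0 ≤ x i) ∧ ∑ i, x i ≤ 1}

noncomputable def hausVolConst (k : ℕ) : ℝ≥0∞ :=
  (((Fintype.card (Fin k) : ℝ≥0) ^ (1 / (2 : ℝ≥0∞)).toReal : ℝ≥0) : ℝ≥0∞) ^ (k : ℝ)

lemma hausVolConst_ne_top (k : ℕ) : hausVolConst k ≠ ∞ :=
  ENNReal.rpow_ne_top_of_nonneg (by positivity) ENNReal.coe_ne_top

lemma lipschitzWith_withLpEquiv_symm (k : ℕ) :
    LipschitzWith ((Fintype.card (Fin k) : ℝ≥0) ^ (1 / (2 : ℝ≥0∞)).toReal)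
      ((WithLp.equiv 2 (Fin k → ℝ)).symm) := fun a b => by
  simpa using PiLp.antilipschitzWith_ofLp 2 (fun _ : Fin k => ℝ)
    ((WithLp.equiv 2 (Fin k → ℝ)).symm a) ((WithLp.equiv 2 (Fin k → ℝ)).symm b)

lemma hausdorff_le_const_mul_volume (k : ℕ) (A : Set (EuclideanSpace ℝ (Fin k)))
    (hA : MeasurableSet A) :
    μH[(k : ℝ)] A ≤ hausVolConst k * volume A := by
  have hpi : (μH[(k : ℝ)] : Measure ((Fin k) → ℝ)) = volume := by
    simpa using (hausdorffMeasure_pi_real (ι := Fin k))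
  have himg : A = (WithLp.equiv 2 (Fin k → ℝ)).symm '' ((WithLp.equiv 2 (Fin k → ℝ)) '' A) := by
    simp [Set.image_image]
  have hvol : volume ((WithLp.equiv 2 (Fin k → ℝ)) '' A) = volume A := by
    rw [Equiv.image_eq_preimage_symm]
    have := PiLp.volume_preserving_toLp (Fin k)
    have h2 := this.measure_preimage hA.nullMeasurableSet
    simpa using h2
  calc μH[(k : ℝ)] A
      = μH[(k : ℝ)] ((WithLp.equiv 2 (Fin k → ℝ)).symm '' ((WithLp.equiv 2 (Fin k → ℝ)) '' A)) := by
        rw [← himg]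
    _ ≤ hausVolConst k * μH[(k : ℝ)] ((WithLp.equiv 2 (Fin k → ℝ)) '' A) :=
        (lipschitzWith_withLpEquiv_symm k).hausdorffMeasure_image_le (by positivity) _
    _ = hausVolConst k * volume A := by rw [hpi, hvol]

/-- Closed box of side `1/(m+1)` at integer multi-index `z`. -/
def eBox {k : ℕ} (m : ℕ) (z : Fin k → ℤ) : Set (EuclideanSpace ℝ (Fin k)) :=
  {x | ∀ i, (z i : ℝ) ≤ (m + 1) * x i ∧ (m + 1) * x i ≤ z i + 1}

lemma continuous_coord {k : ℕ} (i : Fin k) :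
    Continuous (fun x : EuclideanSpace ℝ (Fin k) => x i) :=
  (continuous_apply i).comp (PiLp.lipschitzWith_ofLp 2 (fun _ : Fin k => ℝ)).continuous

lemma isClosed_eBox {k : ℕ} (m : ℕ) (z : Fin k → ℤ) : IsClosed (eBox m z) := by
  have : eBox m z = ⋂ i, ({x : EuclideanSpace ℝ (Fin k) | (z i : ℝ) ≤ (m + 1) * x i} ∩
      {x | (m + 1) * x i ≤ z i + 1}) := by
    ext x; simp [eBox, forall_and]
  rw [this]
  refine isClosed_iInter fun i => (IsClosed.inter ?_ ?_)
  · exact isClosed_le continuous_const (continuous_const.mul (continuous_coord i))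
  · exact isClosed_le (continuous_const.mul (continuous_coord i)) continuous_const

lemma isClosed_stdClosedSimplex (k : ℕ) : IsClosed (stdClosedSimplex k) := by
  have : stdClosedSimplex k = (⋂ i, {x : EuclideanSpace ℝ (Fin k) | 0 ≤ x i}) ∩
      {x | ∑ i, x i ≤ 1} := by
    ext x; simp [stdClosedSimplex]
  rw [this]
  refine IsClosed.inter (isClosed_iInter fun i => ?_) ?_
  · exact isClosed_le continuous_const (continuous_coord i)
  · exact isClosed_le (by exact continuous_finset_sum _ fun i _ => continuous_coord i)
      continuous_const

lemma isCompact_stdClosedSimplex (k : ℕ) : IsCompact (stdClosedSimplex k) := by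
  refine Metric.isCompact_of_isClosed_isBounded (isClosed_stdClosedSimplex k) ?_
  refine (Metric.isBounded_closedBall (x := (0 : EuclideanSpace ℝ (Fin k))) (r := 1)).subset ?_
  intro x hx
  obtain ⟨h0, h1⟩ := hx
  have hxle : ∀ i, x i ≤ 1 := by
    intro i
    calc x i ≤ ∑ j, x j := Finset.single_le_sum (fun j _ => h0 j) (Finset.mem_univ i)
    _ ≤ 1 := h1
  have : ‖x‖ ≤ 1 := by
    rw [EuclideanSpace.norm_eq]
    rw [show (1:ℝ) = Real.sqrt 1 by simp]
    refine Real.sqrt_le_sqrt ?_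
    calc ∑ i, ‖x i‖ ^ 2 ≤ ∑ i, x i := by
          refine Finset.sum_le_sum fun i _ => ?_
          rw [Real.norm_of_nonneg (h0 i)]
          nlinarith [h0 i, hxle i]
      _ ≤ 1 := h1
  simpa [Metric.mem_closedBall, dist_zero_right] using this

lemma tsum_indicator_eBox_le {k : ℕ} (m : ℕ) (x : EuclideanSpace ℝ (Fin k)) :
    ∑' z : Fin k → ℤ, (eBox m z).indicator (fun _ => (1 : ℝ≥0∞)) x ≤ 2 ^ k := by
  classical
  set Fz : Finset (Fin k → ℤ) :=
    Fintype.piFinset fun i => {⌊(m + 1 : ℝ) * x i⌋ - 1, ⌊(m + 1 : ℝ) * x i⌋} with hFz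
  have hzero : ∀ z ∉ Fz, (eBox m z).indicator (fun _ => (1 : ℝ≥0∞)) x = 0 := by
    intro z hz
    rw [Set.indicator_of_notMem]
    intro hmem
    refine hz ?_
    rw [hFz, Fintype.mem_piFinset]
    intro i
    obtain ⟨h1, h2⟩ := hmem i
    have ha : z i ≤ ⌊(m + 1 : ℝ) * x i⌋ := Int.le_floor.2 h1
    have hb : ⌊(m + 1 : ℝ) * x i⌋ ≤ z i + 1 := by
      have := Int.floor_le_floor (R := ℝ) h2
      simpa using this
    simp only [Finset.mem_insert, Finset.mem_singleton]
    omega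
  rw [tsum_eq_sum hzero]
  calc ∑ z ∈ Fz, (eBox m z).indicator (fun _ => (1 : ℝ≥0∞)) x
      ≤ ∑ _z ∈ Fz, (1 : ℝ≥0∞) := by
        refine Finset.sum_le_sum fun z _ => ?_
        exact Set.indicator_apply_le (fun _ => le_rfl)
    _ = Fz.card := by simp
    _ ≤ 2 ^ k := by
        norm_cast
        rw [hFz, Fintype.card_piFinset]
        calc ∏ i, ({⌊(m + 1 : ℝ) * x i⌋ - 1, ⌊(m + 1 : ℝ) * x i⌋} : Finset ℤ).card
            ≤ ∏ _i : Fin k, 2 := by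
              refine Finset.prod_le_prod (fun _ _ => Nat.zero_le _) fun i _ => ?_
              exact (Finset.card_insert_le _ _).trans (by simp)
          _ = 2 ^ k := by simp

lemma tsum_volume_pieces_le (k m : ℕ) (hs : MeasurableSet (stdClosedSimplex k))
    (hb : ∀ z : Fin k → ℤ, MeasurableSet (stdClosedSimplex k ∩ eBox m z)) :
    ∑' z : Fin k → ℤ, volume (stdClosedSimplex k ∩ eBox m z)
      ≤ 2 ^ k * volume (stdClosedSimplex k) := by
  have h1 : ∀ z : Fin k → ℤ, volume (stdClosedSimplex k ∩ eBox m z)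
      = ∫⁻ x, (stdClosedSimplex k ∩ eBox m z).indicator (fun _ => (1 : ℝ≥0∞)) x := by
    intro z
    rw [lintegral_indicator (hb z)]
    simp
  calc ∑' z : Fin k → ℤ, volume (stdClosedSimplex k ∩ eBox m z)
      = ∫⁻ x, ∑' z : Fin k → ℤ,
          (stdClosedSimplex k ∩ eBox m z).indicator (fun _ => (1 : ℝ≥0∞)) x := by
        simp_rw [h1]
        rw [lintegral_tsum fun z => ((measurable_const.indicator (hb z))).aemeasurable]
    _ ≤ ∫⁻ x, (stdClosedSimplex k).indicator (fun _ => (2 : ℝ≥0∞) ^ k) x := by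
        refine lintegral_mono fun x => ?_
        by_cases hx : x ∈ stdClosedSimplex k
        · rw [Set.indicator_of_mem hx]
          calc ∑' z : Fin k → ℤ,
              (stdClosedSimplex k ∩ eBox m z).indicator (fun _ => (1 : ℝ≥0∞)) x
              ≤ ∑' z : Fin k → ℤ, (eBox m z).indicator (fun _ => (1 : ℝ≥0∞)) x := by
                refine ENNReal.tsum_le_tsum fun z => ?_
                exact Set.indicator_le_indicator_of_subset inter_subset_right
                  (fun _ => zero_le) x
            _ ≤ 2 ^ k := tsum_indicator_eBox_le m x
        · rw [Set.indicator_of_notMem hx]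
          have : ∀ z : Fin k → ℤ,
              (stdClosedSimplex k ∩ eBox m z).indicator (fun _ => (1 : ℝ≥0∞)) x = 0 := by
            intro z
            exact Set.indicator_of_notMem (fun h => hx h.1) _
          simp [this]
    _ = 2 ^ k * volume (stdClosedSimplex k) := by
        rw [lintegral_indicator hs]
        simp [mul_comm]

noncomputable def boxIdx {k : ℕ} (m : ℕ) (x : EuclideanSpace ℝ (Fin k)) : Fin k → ℤ :=
  fun i => ⌊(m + 1 : ℝ) * x i⌋

lemma mem_eBox_boxIdx {k : ℕ} (m : ℕ) (x : EuclideanSpace ℝ (Fin k)) :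
    x ∈ eBox m (boxIdx m x) := by
  intro i
  exact ⟨Int.floor_le _, by
    have := (Int.lt_floor_add_one ((m + 1 : ℝ) * x i)).le
    simpa [boxIdx] using this⟩

lemma eventually_injOn_boxIdx {k : ℕ} (F : Finset (EuclideanSpace ℝ (Fin k))) :
    ∀ᶠ m in atTop, Set.InjOn (boxIdx (k := k) m) F := by
  have key : ∀ x ∈ F, ∀ x' ∈ F, ∀ᶠ m in atTop,
      x ≠ x' → boxIdx (k := k) m x ≠ boxIdx m x' := by
    intro x _ x' _
    by_cases hxx : x = x'
    · simp [hxx]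
    · obtain ⟨i, hi⟩ : ∃ i, x i ≠ x' i := by
        by_contra h
        push_neg at h
        exact hxx (by ext i; exact h i)
      have hd : (0 : ℝ) < |x i - x' i| := abs_pos.2 (sub_ne_zero.2 hi)
      have htend : Tendsto (fun m : ℕ => (m + 1 : ℝ) * |x i - x' i|) atTop atTop := by
        refine Tendsto.atTop_mul_const hd ?_
        exact tendsto_atTop_add_const_right _ _ tendsto_natCast_atTop_atTop
      filter_upwards [htend.eventually_ge_atTop 1] with m hm _ heq
      have hfe : ⌊(m + 1 : ℝ) * x i⌋ = ⌊(m + 1 : ℝ) * x' i⌋ := congrFun heq i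
      have habs : |(m + 1 : ℝ) * x i - (m + 1 : ℝ) * x' i| < 1 :=
        Int.abs_sub_lt_one_of_floor_eq_floor hfe
      rw [← mul_sub, abs_mul, abs_of_nonneg (by positivity : (0:ℝ) ≤ (m + 1 : ℝ))] at habs
      linarith
  have := (Filter.eventually_all_finset F).2 fun x hx =>
    (Filter.eventually_all_finset F).2 fun x' hx' => key x hx x' hx'
  filter_upwards [this] with m hm
  intro x hx x' hx' heq
  by_contra hne
  exact hm x (by simpa using hx) x' (by simpa using hx') hne heq

lemma card_le_g {k n : ℕ} (E : EuclideanSpace ℝ (Fin k) → EuclideanSpace ℝ (Fin n))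
    (y : EuclideanSpace ℝ (Fin n)) (F : Finset (EuclideanSpace ℝ (Fin k)))
    (hF : ↑F ⊆ stdClosedSimplex k ∩ E ⁻¹' {y}) :
    (F.card : ℝ≥0∞) ≤ atTop.liminf fun m : ℕ => ∑' z : Fin k → ℤ,
      (E '' (stdClosedSimplex k ∩ eBox m z)).indicator (fun _ => (1 : ℝ≥0∞)) y := by
  classical
  refine le_liminf_of_le (by isBoundedDefault) ?_
  filter_upwards [eventually_injOn_boxIdx F] with m hm
  have himg : ∀ z ∈ F.image (boxIdx m),
      (E '' (stdClosedSimplex k ∩ eBox m z)).indicator (fun _ => (1 : ℝ≥0∞)) y = 1 := by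
    intro z hz
    obtain ⟨x, hxF, rfl⟩ := Finset.mem_image.1 hz
    have hx := hF hxF
    have hy : y ∈ E '' (stdClosedSimplex k ∩ eBox m (boxIdx m x)) :=
      ⟨x, ⟨hx.1, mem_eBox_boxIdx m x⟩, by simpa using hx.2⟩
    exact Set.indicator_of_mem hy _
  calc (F.card : ℝ≥0∞)
      = ((F.image (boxIdx m)).card : ℝ≥0∞) := by
        rw [Finset.card_image_of_injOn hm]
    _ = ∑ z ∈ F.image (boxIdx m),
        (E '' (stdClosedSimplex k ∩ eBox m z)).indicator (fun _ => (1 : ℝ≥0∞)) y := by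
        rw [Finset.sum_congr rfl himg]
        simp
    _ ≤ ∑' z : Fin k → ℤ,
        (E '' (stdClosedSimplex k ∩ eBox m z)).indicator (fun _ => (1 : ℝ≥0∞)) y :=
        ENNReal.sum_le_tsum _

/-- For an `L`-Lipschitz map `E` on the standard closed `k`-simplex into
`ℝⁿ`, the integral of the multiplicity function `N(E, y)` against Hausdorff
`k`-measure is bounded by `L^k · m_k(σ_k) · C_k` for a dimensional constant
`C_k`; in particular `N(E, y)` is finite for `h_k`-almost every `y`. -/
theorem multiplicity_integral_bound (k n : ℕ) (L : ℝ≥0)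
    (E : EuclideanSpace ℝ (Fin k) → EuclideanSpace ℝ (Fin n))
    (hE : LipschitzOnWith L E (stdClosedSimplex k)) :
    ∃ C : ℝ≥0∞, 0 < C ∧ C ≠ ∞ ∧
      (∫⁻ y : EuclideanSpace ℝ (Fin n),
          ((stdClosedSimplex k ∩ E ⁻¹' {y}).encard : ℝ≥0∞) ∂μH[(k : ℝ)])
        ≤ (L : ℝ≥0∞) ^ k * volume (stdClosedSimplex k) * C ∧
      (∀ᵐ y : EuclideanSpace ℝ (Fin n) ∂μH[(k : ℝ)],
        (stdClosedSimplex k ∩ E ⁻¹' {y}).Finite) := by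
  classical
  set s := stdClosedSimplex k with hs_def
  have hsc : IsCompact s := isCompact_stdClosedSimplex k
  have hsm : MeasurableSet s := (isClosed_stdClosedSimplex k).measurableSet
  have hpiece_meas : ∀ (m : ℕ) (z : Fin k → ℤ), MeasurableSet (s ∩ eBox m z) :=
    fun m z => hsm.inter (isClosed_eBox m z).measurableSet
  have hTcompact : ∀ (m : ℕ) (z : Fin k → ℤ), IsCompact (E '' (s ∩ eBox m z)) := by
    intro m z
    exact (hsc.inter_right (isClosed_eBox m z)).image_of_continuousOn
      (hE.continuousOn.mono inter_subset_left)
  have hTmeas : ∀ (m : ℕ) (z : Fin k → ℤ), MeasurableSet (E '' (s ∩ eBox m z)) :=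
    fun m z => (hTcompact m z).isClosed.measurableSet
  -- the approximating multiplicity functions
  set g : ℕ → EuclideanSpace ℝ (Fin n) → ℝ≥0∞ := fun m y =>
    ∑' z : Fin k → ℤ, (E '' (s ∩ eBox m z)).indicator (fun _ => (1 : ℝ≥0∞)) y with hg_def
  have hg_meas : ∀ m, Measurable (g m) := by
    intro m
    exact Measurable.ennreal_tsum fun z => measurable_const.indicator (hTmeas m z)
  set G : EuclideanSpace ℝ (Fin n) → ℝ≥0∞ := fun y => atTop.liminf fun m => g m y with hG_def
  have hG_meas : Measurable G := .liminf hg_meas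
  -- pointwise bound: multiplicity ≤ G
  have hNG : ∀ y : EuclideanSpace ℝ (Fin n),
      ((s ∩ E ⁻¹' {y}).encard : ℝ≥0∞) ≤ G y := by
    intro y
    have hG_eq : G y = atTop.liminf fun m : ℕ => ∑' z : Fin k → ℤ,
        (E '' (stdClosedSimplex k ∩ eBox m z)).indicator (fun _ => (1 : ℝ≥0∞)) y := rfl
    rw [hG_eq]
    by_cases hfin : (s ∩ E ⁻¹' {y}).Finite
    · have hFsub : ↑hfin.toFinset ⊆ s ∩ E ⁻¹' {y} := by simp
      have h1 := card_le_g E y hfin.toFinset hFsub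
      rw [Set.Finite.encard_eq_coe_toFinset_card hfin]
      exact_mod_cast h1
    · have htop : (s ∩ E ⁻¹' {y}).encard = ⊤ := Set.Infinite.encard_eq hfin
      rw [htop]
      have hcast : (((⊤ : ℕ∞)) : ℝ≥0∞) = ⊤ := by simp
      rw [hcast, top_le_iff]
      by_contra hne
      obtain ⟨j, hj⟩ := ENNReal.exists_nat_gt hne
      obtain ⟨F, hFsub, hFcard⟩ := Set.Infinite.exists_subset_card_eq hfin j
      have h1 := card_le_g E y F hFsub
      rw [hFcard] at h1
      exact absurd (lt_of_le_of_lt h1 hj) (lt_irrefl _)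
  -- integral of g m is uniformly bounded
  have hint : ∀ m : ℕ, ∫⁻ y, g m y ∂μH[(k : ℝ)]
      ≤ (L : ℝ≥0∞) ^ k * volume s * (hausVolConst k * 2 ^ k) := by
    intro m
    have hiter : ∫⁻ y, g m y ∂μH[(k : ℝ)]
        = ∑' z : Fin k → ℤ, μH[(k : ℝ)] (E '' (s ∩ eBox m z)) := by
      rw [hg_def]
      rw [lintegral_tsum fun z => (measurable_const.indicator (hTmeas m z)).aemeasurable]
      congr 1
      ext z
      rw [lintegral_indicator (hTmeas m z)]
      simp
    rw [hiter]
    have hterm : ∀ z : Fin k → ℤ, μH[(k : ℝ)] (E '' (s ∩ eBox m z))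
        ≤ (L : ℝ≥0∞) ^ k * (hausVolConst k * volume (s ∩ eBox m z)) := by
      intro z
      calc μH[(k : ℝ)] (E '' (s ∩ eBox m z))
          ≤ (L : ℝ≥0∞) ^ (k : ℝ) * μH[(k : ℝ)] (s ∩ eBox m z) :=
            (hE.mono inter_subset_left).hausdorffMeasure_image_le (Nat.cast_nonneg k)
        _ ≤ (L : ℝ≥0∞) ^ (k : ℝ) * (hausVolConst k * volume (s ∩ eBox m z)) := by
            exact mul_le_mul_right (hausdorff_le_const_mul_volume k _ (hpiece_meas m z)) _
        _ = (L : ℝ≥0∞) ^ k * (hausVolConst k * volume (s ∩ eBox m z)) := by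
            rw [ENNReal.rpow_natCast]
    calc ∑' z : Fin k → ℤ, μH[(k : ℝ)] (E '' (s ∩ eBox m z))
        ≤ ∑' z : Fin k → ℤ, (L : ℝ≥0∞) ^ k * (hausVolConst k * volume (s ∩ eBox m z)) :=
          ENNReal.tsum_le_tsum hterm
      _ = (L : ℝ≥0∞) ^ k * hausVolConst k * ∑' z : Fin k → ℤ, volume (s ∩ eBox m z) := by
          rw [ENNReal.tsum_mul_left]
          rw [ENNReal.tsum_mul_left]
          ring
      _ ≤ (L : ℝ≥0∞) ^ k * hausVolConst k * (2 ^ k * volume s) := by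
          exact mul_le_mul_right (tsum_volume_pieces_le k m hsm (hpiece_meas m)) _
      _ = (L : ℝ≥0∞) ^ k * volume s * (hausVolConst k * 2 ^ k) := by ring
  refine ⟨hausVolConst k * 2 ^ k + 1, ?_, ?_, ?_, ?_⟩
  · exact lt_of_lt_of_le zero_lt_one le_add_self
  · refine ENNReal.add_ne_top.2 ⟨ENNReal.mul_ne_top (hausVolConst_ne_top k) ?_, ENNReal.one_ne_top⟩
    exact (ENNReal.pow_ne_top (by norm_num))
  · -- main integral bound
    calc ∫⁻ y, ((s ∩ E ⁻¹' {y}).encard : ℝ≥0∞) ∂μH[(k : ℝ)]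
        ≤ ∫⁻ y, G y ∂μH[(k : ℝ)] := lintegral_mono hNG
      _ ≤ atTop.liminf fun m => ∫⁻ y, g m y ∂μH[(k : ℝ)] := lintegral_liminf_le hg_meas
      _ ≤ (L : ℝ≥0∞) ^ k * volume s * (hausVolConst k * 2 ^ k) :=
          liminf_le_of_frequently_le (Frequently.of_forall hint) (by isBoundedDefault)
      _ ≤ (L : ℝ≥0∞) ^ k * volume s * (hausVolConst k * 2 ^ k + 1) :=
          mul_le_mul_right le_self_add _
  · -- a.e. finiteness
    have hB : (∫⁻ y, G y ∂μH[(k : ℝ)]) ≠ ⊤ := by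
      refine ne_top_of_le_ne_top ?_
        ((lintegral_liminf_le hg_meas).trans
          (liminf_le_of_frequently_le (Frequently.of_forall hint) (by isBoundedDefault)))
      exact ENNReal.mul_ne_top
        (ENNReal.mul_ne_top (ENNReal.pow_ne_top ENNReal.coe_ne_top) hsc.measure_lt_top.ne)
        (ENNReal.mul_ne_top (hausVolConst_ne_top k) (ENNReal.pow_ne_top (by norm_num)))
    filter_upwards [ae_lt_top hG_meas hB] with y hy
    have := lt_of_le_of_lt (hNG y) hy
    rw [← Set.encard_ne_top_iff]
    intro htop
    rw [htop] at this
    simp at this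
end

section
/- Let π : ℝ^n \ {u} → ∂B(u, R) be the radial projection x ↦ u + R·(x−u)/‖x−u‖ restricted to B(u,R) \ {u}. Then π is differentiable on B(u,R) \ {u} and its k-dimensional Jacobian at x is bounded above by (R/‖x − u‖)^k. -/
open Metric
open scoped RealInnerProductSpace

open Matrix

/-- Gram matrices are positive semidefinite. -/
lemma gram_posSemidef {E : Type*} [NormedAddCommGroup E] [InnerProductSpace ℝ E]
    {k : ℕ} (v : Fin k → E) :
    (Matrix.of fun i j => ⟪v i, v j⟫).PosSemidef := by
  refine Matrix.posSemidef_iff_dotProduct_mulVec.mpr ⟨?_, ?_⟩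
  · ext i j
    simp [Matrix.conjTranspose_apply, real_inner_comm]
  · intro x
    have h : star x ⬝ᵥ ((Matrix.of fun i j => ⟪v i, v j⟫) *ᵥ x)
        = ⟪∑ i, x i • v i, ∑ j, x j • v j⟫ := by
      simp [dotProduct, Matrix.mulVec, inner_sum, sum_inner,
        real_inner_smul_left, real_inner_smul_right, Finset.mul_sum, mul_comm, mul_left_comm,
        -inner_self_eq_norm_sq_to_K]
      rw [Finset.sum_comm]
      refine Finset.sum_congr rfl fun i _ => Finset.sum_congr rfl fun j _ => ?_
      rw [real_inner_comm]
      ring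
    rw [h]
    exact real_inner_self_nonneg

lemma det_sub_vecMulVec_le {k : ℕ} (G : Matrix (Fin k) (Fin k) ℝ) (a : Fin k → ℝ)
    (hG : G.PosSemidef) (hP : (G - Matrix.vecMulVec a a).PosSemidef) :
    (G - Matrix.vecMulVec a a).det ≤ G.det := by
  by_cases hdet : G.det = 0
  · rw [hdet]
    obtain ⟨y, hy0, hy⟩ := (Matrix.exists_mulVec_eq_zero_iff (A := ℝ)).mpr hdet
    have h1 : y ⬝ᵥ ((G - Matrix.vecMulVec a a) *ᵥ y) + (a ⬝ᵥ y) * (a ⬝ᵥ y) = 0 := by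
      have : y ⬝ᵥ (G *ᵥ y) = 0 := by rw [hy, dotProduct_zero]
      have hvv : y ⬝ᵥ (Matrix.vecMulVec a a) *ᵥ y = (a ⬝ᵥ y) * (a ⬝ᵥ y) := by
        simp [Matrix.vecMulVec, Matrix.mulVec, dotProduct, Finset.mul_sum,
          Finset.sum_mul]
        rw [Finset.sum_comm]
        refine Finset.sum_congr rfl fun i _ => Finset.sum_congr rfl fun j _ => by ring
      rw [← this, Matrix.sub_mulVec, dotProduct_sub, hvv]
      ring
    have hq0 : y ⬝ᵥ ((G - Matrix.vecMulVec a a) *ᵥ y) = 0 := by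
      have h2 := hP.dotProduct_mulVec_nonneg y
      simp only [star_trivial] at h2
      nlinarith [h1, h2]
    have hker : (G - Matrix.vecMulVec a a) *ᵥ y = 0 := by
      have := (hP.dotProduct_mulVec_zero_iff y).mp (by simpa using hq0)
      simpa using this
    have : (G - Matrix.vecMulVec a a).det = 0 :=
      (Matrix.exists_mulVec_eq_zero_iff (A := ℝ)).mp ⟨y, hy0, hker⟩
    simp [this]
  · have hGpd : G.PosDef := by
      refine Matrix.posDef_iff_dotProduct_mulVec.mpr ⟨hG.1, fun z hz => lt_of_le_of_ne (hG.dotProduct_mulVec_nonneg z) fun h => ?_⟩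
      have : G *ᵥ z = 0 := (hG.dotProduct_mulVec_zero_iff z).mp h.symm
      exact hdet ((Matrix.exists_mulVec_eq_zero_iff (A := ℝ)).mp ⟨z, hz, this⟩)
    have hGi : (G⁻¹).PosDef := Matrix.posDef_inv_iff.mpr hGpd
    have ht : 0 ≤ a ⬝ᵥ (G⁻¹ *ᵥ a) := by simpa using hGi.posSemidef.dotProduct_mulVec_nonneg a
    have hsub : G - Matrix.vecMulVec a a = G + Matrix.replicateCol (Unit) (-a) * Matrix.replicateRow (Unit) a := by
      rw [← Matrix.vecMulVec_eq (Unit)]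
      ext i j
      simp [Matrix.vecMulVec_apply]
      ring
    have key := Matrix.det_add_replicateCol_mul_replicateRow (ι := Unit) (A := G)
      (isUnit_iff_ne_zero.mpr hdet) (-a) a
    rw [hsub, key, Matrix.det_unique (A := 1 + Matrix.replicateRow Unit a * G⁻¹ * Matrix.replicateCol Unit (-a))]
    have hentry : ((1 + Matrix.replicateRow Unit a * G⁻¹ * Matrix.replicateCol Unit (-a) : Matrix Unit Unit ℝ)) default default
        = 1 - a ⬝ᵥ (G⁻¹ *ᵥ a) := by
      simp [Matrix.mul_apply, Matrix.replicateRow_apply, Matrix.replicateCol_apply, Matrix.mulVec,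
        dotProduct, Finset.sum_mul, Finset.mul_sum]
      exact congrArg (fun t => 1 + -t)
        (Finset.sum_congr rfl fun i _ => Finset.sum_congr rfl fun j _ => by
          rw [← hGi.1.apply i j, star_trivial]; ring)
    rw [hentry]
    have hdetpos := hGpd.det_pos
    nlinarith

/-- Radial projection `π : x ↦ u + R • (x - u) / ‖x - u‖` from `u` onto the
sphere `∂B(u, R)` is differentiable on `B(u,R) \ {u}`, and its `k`-dimensional
Jacobian at `x` is at most `(R / ‖x - u‖)^k`: for any `k` vectors, the Gram
determinant of their images is at most `(R / ‖x - u‖)^(2k)` times the Gram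
determinant of the vectors. -/
theorem radial_projection_jacobian_bound (n k : ℕ)
    (u : EuclideanSpace ℝ (Fin n)) (R : ℝ) (hR : 0 < R) :
    ∀ x ∈ ball u R, x ≠ u →
      ∃ D : EuclideanSpace ℝ (Fin n) →L[ℝ] EuclideanSpace ℝ (Fin n),
        HasFDerivAt (fun y => u + (R / ‖y - u‖) • (y - u)) D x ∧
        ∀ v : Fin k → EuclideanSpace ℝ (Fin n),
          Matrix.det (Matrix.of fun i j => ⟪D (v i), D (v j)⟫) ≤
            (R / ‖x - u‖) ^ (2 * k) *
              Matrix.det (Matrix.of fun i j => ⟪v i, v j⟫) := by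
  intro x _hx hxu
  set z : EuclideanSpace ℝ (Fin n) := x - u with hz
  have hz0 : z ≠ 0 := sub_ne_zero.mpr hxu
  set r : ℝ := ‖z‖ with hrdef
  have hr : 0 < r := norm_pos_iff.mpr hz0
  have hrne : r ≠ 0 := hr.ne'
  have ht0 : ⟪z, z⟫ = r ^ 2 := real_inner_self_eq_norm_sq z
  have hsqrt : Real.sqrt ⟪z, z⟫ = r := by rw [ht0, Real.sqrt_sq hr.le]
  have ht0pos : (0 : ℝ) < ⟪z, z⟫ := by rw [ht0]; positivity
  have hg : HasFDerivAt (fun y : EuclideanSpace ℝ (Fin n) => y - u)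
      (ContinuousLinearMap.id ℝ (EuclideanSpace ℝ (Fin n))) x :=
    (hasFDerivAt_id x).sub_const u
  have hq : HasFDerivAt (fun y : EuclideanSpace ℝ (Fin n) => ⟪y - u, y - u⟫)
      ((fderivInnerCLM ℝ (z, z)).comp
        ((ContinuousLinearMap.id ℝ (EuclideanSpace ℝ (Fin n))).prod
          (ContinuousLinearMap.id ℝ (EuclideanSpace ℝ (Fin n))))) x := by
    simpa [hz] using hg.inner ℝ hg
  have hsc : HasDerivAt (fun t : ℝ => R * (Real.sqrt t)⁻¹)
      (R * (-(1 / (2 * Real.sqrt ⟪z, z⟫)) / Real.sqrt ⟪z, z⟫ ^ 2)) ⟪z, z⟫ :=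
    ((Real.hasDerivAt_sqrt ht0pos.ne').inv (by rw [hsqrt]; exact hr.ne')).const_mul R
  have hc : HasFDerivAt (fun y : EuclideanSpace ℝ (Fin n) =>
      R * (Real.sqrt ⟪y - u, y - u⟫)⁻¹)
      ((R * (-(1 / (2 * Real.sqrt ⟪z, z⟫)) / Real.sqrt ⟪z, z⟫ ^ 2)) •
        ((fderivInnerCLM ℝ (z, z)).comp
          ((ContinuousLinearMap.id ℝ (EuclideanSpace ℝ (Fin n))).prod
            (ContinuousLinearMap.id ℝ (EuclideanSpace ℝ (Fin n)))))) x :=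
    HasDerivAt.comp_hasFDerivAt (h₂ := fun t : ℝ => R * (Real.sqrt t)⁻¹)
      (f := fun y : EuclideanSpace ℝ (Fin n) => ⟪y - u, y - u⟫) x hsc hq
  set c' : EuclideanSpace ℝ (Fin n) →L[ℝ] ℝ :=
    (R * (-(1 / (2 * Real.sqrt ⟪z, z⟫)) / Real.sqrt ⟪z, z⟫ ^ 2)) •
        ((fderivInnerCLM ℝ (z, z)).comp
          ((ContinuousLinearMap.id ℝ (EuclideanSpace ℝ (Fin n))).prod
            (ContinuousLinearMap.id ℝ (EuclideanSpace ℝ (Fin n))))) with hc'def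
  set D : EuclideanSpace ℝ (Fin n) →L[ℝ] EuclideanSpace ℝ (Fin n) :=
    (R * (Real.sqrt ⟪z, z⟫)⁻¹) • ContinuousLinearMap.id ℝ (EuclideanSpace ℝ (Fin n)) +
      c'.smulRight z with hDdef
  have hfd : HasFDerivAt (fun y => u + (R / ‖y - u‖) • (y - u)) D x := by
    have h1 : HasFDerivAt (fun y : EuclideanSpace ℝ (Fin n) =>
        u + (R * (Real.sqrt ⟪y - u, y - u⟫)⁻¹) • (y - u)) D x := by
      simpa [hDdef, hz] using (hc.smul hg).const_add u
    have heq : (fun y : EuclideanSpace ℝ (Fin n) => u + (R / ‖y - u‖) • (y - u)) =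
        fun y : EuclideanSpace ℝ (Fin n) =>
          u + (R * (Real.sqrt ⟪y - u, y - u⟫)⁻¹) • (y - u) := by
      funext y
      rw [real_inner_self_eq_norm_sq, Real.sqrt_sq (norm_nonneg _), div_eq_mul_inv]
    rw [heq]
    exact h1
  have hD : ∀ w : EuclideanSpace ℝ (Fin n),
      D w = (R / r) • w - ((R / r ^ 3) * ⟪z, w⟫) • z := by
    intro w
    simp only [hDdef, hc'def, ContinuousLinearMap.add_apply, ContinuousLinearMap.smul_apply,
      ContinuousLinearMap.id_apply, ContinuousLinearMap.smulRight_apply,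
      ContinuousLinearMap.comp_apply, ContinuousLinearMap.prod_apply, fderivInnerCLM_apply,
      hsqrt, smul_eq_mul]
    rw [real_inner_comm w z]
    match_scalars
    all_goals field_simp
    all_goals ring
  refine ⟨D, hfd, ?_⟩
  intro v
  set a : Fin k → ℝ := fun i => r⁻¹ * ⟪z, v i⟫ with hadef
  set G : Matrix (Fin k) (Fin k) ℝ := Matrix.of fun i j => ⟪v i, v j⟫ with hGdef
  have hMeq : (Matrix.of fun i j => ⟪D (v i), D (v j)⟫) =
      ((R / r) ^ 2) • (G - Matrix.vecMulVec a a) := by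
    ext i j
    simp only [Matrix.of_apply, Matrix.smul_apply, Matrix.sub_apply, Matrix.vecMulVec_apply,
      hGdef, hadef, hD, smul_eq_mul, inner_sub_left, inner_sub_right,
      real_inner_smul_left, real_inner_smul_right, ht0]
    rw [real_inner_comm (v i) z]
    field_simp
    ring
  have hPsub : G - Matrix.vecMulVec a a =
      Matrix.of fun i j => ⟪v i - (a i * r⁻¹) • z, v j - (a j * r⁻¹) • z⟫ := by
    ext i j
    simp only [Matrix.sub_apply, Matrix.of_apply, Matrix.vecMulVec_apply, hGdef, hadef,
      inner_sub_left, inner_sub_right, real_inner_smul_left, real_inner_smul_right, ht0]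
    rw [real_inner_comm (v i) z]
    field_simp
    ring
  have hPpsd : (G - Matrix.vecMulVec a a).PosSemidef := by
    rw [hPsub]; exact gram_posSemidef _
  have hGpsd : G.PosSemidef := gram_posSemidef v
  have hdetle : (G - Matrix.vecMulVec a a).det ≤ G.det :=
    det_sub_vecMulVec_le G a hGpsd hPpsd
  rw [hMeq, Matrix.det_smul]
  have hpow : ((R / r) ^ 2) ^ k = (R / r) ^ (2 * k) := by rw [← pow_mul]
  rw [Fintype.card_fin, hpow]
  have hnn : (0 : ℝ) ≤ (R / r) ^ (2 * k) := by positivity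
  exact mul_le_mul_of_nonneg_left hdetle hnn
end

section
/- Radial projection from a point p in the interior of a compact convex set σ ⊂ ℝ^n onto the boundary ∂σ is Lipschitz on σ \ B(p, r) for every r > 0, with Lipschitz constant depending only on σ, p, and r. -/
open Metric Set
open scoped NNReal

/-- Radial projection from an interior point `p` of a compact convex body
`σ ⊆ ℝⁿ` onto the boundary `∂σ` is Lipschitz on `σ \ B(p, r)` for every
`r > 0`, with constant depending only on `σ`, `p` and `r`. -/
theorem radial_projection_onto_boundary_lipschitz (n : ℕ)
    (σ : Set (EuclideanSpace ℝ (Fin n))) (hσc : IsCompact σ)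
    (hσconv : Convex ℝ σ) (p : EuclideanSpace ℝ (Fin n))
    (hp : p ∈ interior σ) (r : ℝ) (hr : 0 < r) :
    ∃ (K : ℝ≥0) (proj : EuclideanSpace ℝ (Fin n) → EuclideanSpace ℝ (Fin n)),
      (∀ x ∈ σ, x ≠ p →
        proj x ∈ frontier σ ∧ ∃ t : ℝ, 0 < t ∧ proj x = p + t • (x - p)) ∧
      LipschitzOnWith K proj (σ \ ball p r) := by
  classical
  -- translated body
  set τ : Set (EuclideanSpace ℝ (Fin n)) := (fun u => u + p) ⁻¹' σ with hτdef
  have hτconv : Convex ℝ τ := hσconv.translate_preimage_left p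
  have hmemτ : ∀ u : EuclideanSpace ℝ (Fin n), u ∈ τ ↔ u + p ∈ σ := fun u => Iff.rfl
  -- 0 in interior of τ
  have h0 : (0 : EuclideanSpace ℝ (Fin n)) ∈ interior τ := by
    have : interior τ = (fun u : EuclideanSpace ℝ (Fin n) => u + p) ⁻¹' interior σ :=
      ((Homeomorph.addRight p).preimage_interior σ).symm
    rw [this]
    simpa using hp
  have hτnhds : τ ∈ nhds (0 : EuclideanSpace ℝ (Fin n)) := mem_interior_iff_mem_nhds.mp h0
  have habs : Absorbent ℝ τ := absorbent_nhds_zero hτnhds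
  -- small ball inside τ
  obtain ⟨ε, hε, hball⟩ : ∃ ε > 0, ball (0 : EuclideanSpace ℝ (Fin n)) ε ⊆ τ :=
    Metric.mem_nhds_iff.mp hτnhds
  -- τ inside closed ball of radius R
  obtain ⟨R, hR0, hRsub⟩ : ∃ R, 0 < R ∧ σ ⊆ closedBall p R :=
    hσc.isBounded.subset_closedBall_lt 0 p
  have hτR : ∀ u ∈ τ, ‖u‖ ≤ R := by
    intro u hu
    have := hRsub hu
    simpa [dist_eq_norm] using this
  -- gauge bounds
  have hg_lower : ∀ u : EuclideanSpace ℝ (Fin n), ‖u‖ / R ≤ gauge τ u := by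
    intro u
    have hsub : τ ⊆ closedBall (0 : EuclideanSpace ℝ (Fin n)) R := by
      intro u hu; simpa [dist_eq_norm] using hτR u hu
    have := gauge_mono habs hsub u
    rwa [gauge_closedBall hR0.le] at this
  have hg_upper : ∀ u : EuclideanSpace ℝ (Fin n), gauge τ u ≤ ‖u‖ / ε := by
    intro u
    have := gauge_mono (absorbent_ball_zero hε) hball u
    rwa [gauge_ball hε.le] at this
  have hg_sub : ∀ u v : EuclideanSpace ℝ (Fin n), gauge τ (u + v) ≤ gauge τ u + gauge τ v :=
    gauge_add_le hτconv habs
  -- the projection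
  set g : EuclideanSpace ℝ (Fin n) → ℝ := gauge τ with hg
  set proj : EuclideanSpace ℝ (Fin n) → EuclideanSpace ℝ (Fin n) := fun x => p + (g (x - p))⁻¹ • (x - p) with hproj
  -- positivity of gauge on σ minus p, away from p
  have hgpos : ∀ x : EuclideanSpace ℝ (Fin n), x ≠ p → 0 < g (x - p) := by
    intro x hx
    have hne : x - p ≠ 0 := sub_ne_zero.mpr hx
    have h1 : 0 < ‖x - p‖ / R := div_pos (norm_pos_iff.mpr hne) hR0
    exact lt_of_lt_of_le h1 (hg_lower _)
  -- constant
  set C : ℝ := R / r + R ^ 3 / (ε * r ^ 2) with hC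
  have hC0 : 0 ≤ C := by positivity
  refine ⟨(⟨C, hC0⟩ : ℝ≥0), proj, ?_, ?_⟩
  · intro x hx hxp
    have hgx := hgpos x hxp
    constructor
    · -- frontier
      have hm : g ((g (x - p))⁻¹ • (x - p)) = 1 := by
        rw [hg, gauge_smul_of_nonneg (inv_nonneg.mpr hgx.le)]
        simp only [smul_eq_mul]
        field_simp
        rfl
      have hfr : (g (x - p))⁻¹ • (x - p) ∈ frontier τ :=
        (gauge_eq_one_iff_mem_frontier hτconv hτnhds).mp hm
      have : frontier τ = (fun u : EuclideanSpace ℝ (Fin n) => u + p) ⁻¹' frontier σ :=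
        ((Homeomorph.addRight p).preimage_frontier σ).symm
      rw [this] at hfr
      simpa [hproj, add_comm] using hfr
    · exact ⟨(g (x - p))⁻¹, inv_pos.mpr hgx, rfl⟩
  · -- Lipschitz
    refine lipschitzOnWith_iff_dist_le_mul.mpr ?_
    intro x hx y hy
    obtain ⟨hxσ, hxb⟩ := hx
    obtain ⟨hyσ, hyb⟩ := hy
    have hxr : r ≤ ‖x - p‖ := by
      by_contra h
      exact hxb (by simpa [dist_eq_norm] using lt_of_not_ge h)
    have hyr : r ≤ ‖y - p‖ := by
      by_contra h
      exact hyb (by simpa [dist_eq_norm] using lt_of_not_ge h)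
    set u := x - p with hu
    set v := y - p with hv
    have huτ : u ∈ τ := by simpa [hmemτ, hu] using hxσ
    have hvτ : v ∈ τ := by simpa [hmemτ, hv] using hyσ
    set a := g u with ha
    set b := g v with hb
    have harR : r / R ≤ a := le_trans (by gcongr) (hg_lower u)
    have hbrR : r / R ≤ b := le_trans (by gcongr) (hg_lower v)
    have ha0 : 0 < a := lt_of_lt_of_le (by positivity) harR
    have hb0 : 0 < b := lt_of_lt_of_le (by positivity) hbrR
    have hvR : ‖v‖ ≤ R := hτR v hvτ
    -- |a - b| ≤ ‖u - v‖ / ε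
    have habd : |a - b| ≤ ‖u - v‖ / ε := by
      rw [abs_sub_le_iff]
      constructor
      · have := hg_sub v (u - v)
        have h2 : a ≤ b + g (u - v) := by
          simpa [add_sub_cancel] using this
        have h3 : g (u - v) ≤ ‖u - v‖ / ε := hg_upper _
        linarith
      · have := hg_sub u (v - u)
        have h2 : b ≤ a + g (v - u) := by
          simpa [add_sub_cancel] using this
        have h3 : g (v - u) ≤ ‖v - u‖ / ε := hg_upper _
        rw [norm_sub_rev] at h3
        linarith
    -- main estimate
    have key : ‖proj x - proj y‖ ≤ C * ‖u - v‖ := by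
      have hid : proj x - proj y = a⁻¹ • (u - v) + ((a⁻¹ - b⁻¹)) • v := by
        simp only [hproj]
        rw [← hu, ← hv, ← ha, ← hb]
        module
      rw [hid]
      have h1 : ‖a⁻¹ • (u - v) + (a⁻¹ - b⁻¹) • v‖
          ≤ a⁻¹ * ‖u - v‖ + |a⁻¹ - b⁻¹| * ‖v‖ := by
        refine le_trans (norm_add_le _ _) ?_
        rw [norm_smul, norm_smul, Real.norm_eq_abs, Real.norm_eq_abs,
          abs_of_pos (inv_pos.mpr ha0)]
      refine h1.trans ?_
      have hainv : a⁻¹ ≤ R / r := by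
        rw [inv_le_comm₀ ha0 (by positivity), inv_div]
        exact harR
      have hbinv : b⁻¹ ≤ R / r := by
        rw [inv_le_comm₀ hb0 (by positivity), inv_div]
        exact hbrR
      have hdinv : |a⁻¹ - b⁻¹| ≤ (‖u - v‖ / ε) * (R / r) ^ 2 := by
        have heq : a⁻¹ - b⁻¹ = (b - a) * (a⁻¹ * b⁻¹) := by
          field_simp
        rw [heq, abs_mul]
        have h4 : |a⁻¹ * b⁻¹| ≤ (R / r) ^ 2 := by
          rw [abs_of_pos (by positivity)]
          calc a⁻¹ * b⁻¹ ≤ (R / r) * (R / r) :=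
                mul_le_mul hainv hbinv (by positivity) (by positivity)
            _ = (R / r) ^ 2 := by ring
        have h5 : |b - a| ≤ ‖u - v‖ / ε := by rw [abs_sub_comm]; exact habd
        exact mul_le_mul h5 h4 (abs_nonneg _) (by positivity)
      calc a⁻¹ * ‖u - v‖ + |a⁻¹ - b⁻¹| * ‖v‖
          ≤ (R / r) * ‖u - v‖ + ((‖u - v‖ / ε) * (R / r) ^ 2) * R := by
            gcongr
        _ = C * ‖u - v‖ := by rw [hC]; field_simp
    have hdist : dist (proj x) (proj y) = ‖proj x - proj y‖ := dist_eq_norm _ _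
    have hdist2 : dist x y = ‖u - v‖ := by
      rw [dist_eq_norm, hu, hv]
      congr 1
      abel
    rw [hdist, hdist2]
    exact key
end
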